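/- Let F be a Borel probability measure on [0,1] and suppose E[(1−W)^j] > 0 for all j ≥ 1. Define, for a polynomial h and w ∈ [0,1], x ∈ [0,1], the operator D_w h(x) = ( h(x(1−w)+w) − h(x(1−w)) )/w for w > 0 and D_0 h(x) = h'(x). Then for every choice of real constants (c_n)_{n≥1} there exists a unique sequence of polynomials (h_n)_{n≥0} with h_0 = 1, h_n of degree n with constant term h_n(0) = c_n and leading coefficient 1/∏_{j=1}^{n−1} E[(1−W)^j], such that for all n ≥ 1 and all x ∈ [0,1]: E[ D_W h_n(x) ] = n · h_{n−1}(x). -/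

import Mathlib

/-!
For a polynomial `h`, the function `x ↦ E[D_W h(x)]` is again a polynomial, obtained from `h`
by a linear operator `T` with `T(X^k) = ∑_{i<k} C(k,i) E[(1-W)^i W^(k-1-i)] X^i` (expand
`(x(1-w)+w)^k` binomially). So `T` lowers the degree by exactly one: the coefficient of
`X^(k-1)` in `T(X^k)` is `k E[(1-W)^(k-1)] ≠ 0`. Such an operator is onto, with the constants
as kernel, hence `h_n` is determined recursively as the unique solution of `T h_n = n h_(n-1)`
with constant term `c_n`; comparing top coefficients gives
`lead(h_n) E[(1-W)^(n-1)] = lead(h_(n-1))`.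
-/

open MeasureTheory Set

/-- The operator `D_w h(x) = (h(x(1-w)+w) - h(x(1-w)))/w` for `w > 0`, `D_0 h(x) = h'(x)`. -/
noncomputable def Dop (w : ℝ) (h : Polynomial ℝ) (x : ℝ) : ℝ :=
  if w = 0 then Polynomial.eval x (Polynomial.derivative h)
  else (Polynomial.eval (x * (1 - w) + w) h - Polynomial.eval (x * (1 - w)) h) / w

/-- `E[D_W h(x)]` where `W = U⬝Y`, `Y ∼ F`, `U` with density `2u` on `(0,1)`. -/
noncomputable def expD (F : Measure ℝ) (h : Polynomial ℝ) (x : ℝ) : ℝ :=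
  ∫ y, (∫ u in Set.Ioo (0:ℝ) 1, Dop (u * y) h x * (2 * u)) ∂F

/-- `E[(1-W)^j]` where `W = U⬝Y`. -/
noncomputable def expMom (F : Measure ℝ) (j : ℕ) : ℝ :=
  ∫ y, (∫ u in Set.Ioo (0:ℝ) 1, (1 - u * y) ^ j * (2 * u)) ∂F

open Polynomial Finset

theorem LinearMap.apply_eq_sum_coeff_smul {R M : Type*} [Semiring R] [AddCommMonoid M]
    [Module R M] (T : R[X] →ₗ[R] M) {p : R[X]} {n : ℕ} (hp : p.natDegree < n) :
    T p = ∑ i ∈ Finset.range n, p.coeff i • T (X ^ i) := by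
  conv_lhs => rw [p.as_sum_range' n hp]
  simp only [map_sum, ← smul_X_eq_monomial, map_smul]

namespace Polynomial

section Semiring

variable {R : Type*} [Semiring R] {T : R[X] →ₗ[R] R[X]}

theorem degree_apply_lt (hdeg : ∀ k : ℕ, (T (X ^ k)).degree < k) {p : R[X]} {N : ℕ}
    (hp : p.natDegree ≤ N) : (T p).degree < N := by
  rw [T.apply_eq_sum_coeff_smul (Nat.lt_succ_of_le hp), ← mem_degreeLT]
  refine Submodule.sum_mem _ fun i hi => Submodule.smul_mem _ _ (mem_degreeLT.mpr ?_)
  exact (hdeg i).trans_le (by exact_mod_cast Finset.mem_range_succ_iff.mp hi)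

theorem apply_C_eq_zero (hdeg : ∀ k : ℕ, (T (X ^ k)).degree < k) (a : R) : T (C a) = 0 := by
  simpa using degree_apply_lt hdeg (p := C a) (N := 0) (natDegree_C a).le

theorem coeff_apply_of_natDegree_le (hdeg : ∀ k : ℕ, (T (X ^ k)).degree < k) {p : R[X]}
    {N : ℕ} (hp : p.natDegree ≤ N + 1) :
    (T p).coeff N = p.coeff (N + 1) * (T (X ^ (N + 1))).coeff N := by
  rw [T.apply_eq_sum_coeff_smul (Nat.lt_succ_of_le hp), finsetSum_coeff, Finset.sum_range_succ,
    Finset.sum_eq_zero, zero_add, coeff_smul, smul_eq_mul]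
  intro i hi
  rw [coeff_smul, coeff_eq_zero_of_degree_lt ((hdeg i).trans_le ?_), smul_zero]
  exact_mod_cast Finset.mem_range_succ_iff.mp hi

theorem natDegree_le_of_degree_apply_lt [NoZeroDivisors R]
    (hdeg : ∀ k : ℕ, (T (X ^ k)).degree < k)
    (hlead : ∀ k : ℕ, (T (X ^ (k + 1))).coeff k ≠ 0) {p : R[X]} {N : ℕ}
    (hT : (T p).degree < N) :
    p.natDegree ≤ N := by
  by_contra! hN
  obtain ⟨D, hD⟩ : ∃ D, p.natDegree = D + 1 := Nat.exists_eq_succ_of_ne_zero (by omega)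
  have hcoeff := coeff_apply_of_natDegree_le hdeg hD.le
  rw [coeff_eq_zero_of_degree_lt (hT.trans_le (by exact_mod_cast (by omega : N ≤ D))), ← hD,
    eq_comm] at hcoeff
  have hp : p ≠ 0 := by rintro rfl; simp at hD
  exact mul_ne_zero (leadingCoeff_ne_zero.mpr hp) (hD ▸ hlead D) hcoeff

theorem natDegree_le_and_coeff_of_apply_eq [NoZeroDivisors R]
    (hdeg : ∀ k : ℕ, (T (X ^ k)).degree < k)
    (hlead : ∀ k : ℕ, (T (X ^ (k + 1))).coeff k ≠ 0) {p q : R[X]} {N : ℕ} (hT : T p = q)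
    (hq : q.natDegree ≤ N) :
    p.natDegree ≤ N + 1 ∧ p.coeff (N + 1) * (T (X ^ (N + 1))).coeff N = q.coeff N := by
  have hp := natDegree_le_of_degree_apply_lt hdeg hlead
    (hT ▸ (degree_le_of_natDegree_le hq).trans_lt (by exact_mod_cast N.lt_succ_self))
  exact ⟨hp, hT ▸ (coeff_apply_of_natDegree_le hdeg hp).symm⟩

end Semiring

section Field

variable {K : Type*} [Field K] {T : K[X] →ₗ[K] K[X]}

theorem surjective_of_degree_apply_X_pow_lt (hdeg : ∀ k : ℕ, (T (X ^ k)).degree < k)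
    (hlead : ∀ k : ℕ, (T (X ^ (k + 1))).coeff k ≠ 0) :
    Function.Surjective T := by
  suffices ∀ N : ℕ, ∀ q : K[X], q.degree < N → ∃ p, T p = q from
    fun q => this _ q (degree_le_natDegree.trans_lt (by exact_mod_cast q.natDegree.lt_succ_self))
  intro N
  induction N with
  | zero => exact fun q hq => ⟨0, by rw [map_zero, eq_comm, ← degree_eq_bot]; simpa using hq⟩
  | succ N ih =>
    intro q hq
    set a := q.coeff N / (T (X ^ (N + 1))).coeff N
    obtain ⟨p, hp⟩ := ih (q - a • T (X ^ (N + 1))) <| by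
      rw [degree_lt_iff_coeff_zero]
      intro m hm
      rcases hm.eq_or_lt with rfl | hm
      · simp [a, div_mul_cancel₀ _ (hlead N)]
      · rw [coeff_sub, coeff_smul, (degree_lt_iff_coeff_zero _ _).mp hq m hm,
          (degree_lt_iff_coeff_zero _ _).mp (hdeg (N + 1)) m hm, smul_zero, sub_zero]
    exact ⟨p + a • X ^ (N + 1), by rw [map_add, map_smul, hp, sub_add_cancel]⟩

theorem existsUnique_coeff_zero_eq_and_apply_eq (hdeg : ∀ k : ℕ, (T (X ^ k)).degree < k)
    (hlead : ∀ k : ℕ, (T (X ^ (k + 1))).coeff k ≠ 0) (c : K) (q : K[X]) :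
    ∃! p : K[X], p.coeff 0 = c ∧ T p = q := by
  obtain ⟨p, hp⟩ := surjective_of_degree_apply_X_pow_lt hdeg hlead q
  refine ⟨p + C (c - p.coeff 0),
    ⟨by simp, by rw [map_add, apply_C_eq_zero hdeg, hp, add_zero]⟩, ?_⟩
  rintro r ⟨hr0, hr⟩
  have hdiff : (r - (p + C (c - p.coeff 0))).natDegree ≤ 0 :=
    natDegree_le_of_degree_apply_lt hdeg hlead (by simp [hr, hp, apply_C_eq_zero hdeg])
  rw [← sub_eq_zero, eq_C_of_natDegree_le_zero hdiff]
  simp [hr0]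

end Field

end Polynomial

theorem Nat.existsUnique_seq {α : Type*} (a : α) (R : ℕ → α → α → Prop)
    (hR : ∀ n x, ∃! y, R n x y) :
    ∃! f : ℕ → α, f 0 = a ∧ ∀ n, R n (f n) (f (n + 1)) := by
  choose next hnext huniq using hR
  let f : ℕ → α := fun n => Nat.rec a next n
  refine ⟨f, ⟨rfl, fun n => hnext n (f n)⟩, fun g ⟨hg0, hg⟩ => funext fun n => ?_⟩
  induction n with
  | zero => exact hg0
  | succ n ih => rw [huniq n (g n) _ (hg n), ih]

theorem Finset.prod_Icc_one_sub_one_eq_prod_range {M : Type*} [CommMonoid M] {f : ℕ → M}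
    (hf : f 0 = 1) (n : ℕ) : ∏ j ∈ Icc 1 (n - 1), f j = ∏ j ∈ range n, f j := by
  cases n with
  | zero => simp
  | succ n =>
    rw [Nat.add_sub_cancel, range_eq_Ico, prod_eq_prod_Ico_succ_bot n.succ_pos, hf, one_mul]
    rfl

section Moments

variable {F : Measure ℝ}

/-- `E[φ(W)]` for `W = U Y`. -/
noncomputable def expW (F : Measure ℝ) (φ : ℝ → ℝ) : ℝ :=
  ∫ y, (∫ u in Ioo (0:ℝ) 1, φ (u * y) * (2 * u)) ∂F

theorem continuous_integral_Ioo {f : ℝ → ℝ → ℝ} (hf : Continuous (Function.uncurry f)) :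
    Continuous fun y => ∫ u in Ioo (0:ℝ) 1, f y u := by
  simp_rw [← integral_Icc_eq_integral_Ioo]
  exact continuous_parametric_integral_of_continuous hf isCompact_Icc

theorem Continuous.integrable_of_measure_compl_eq_zero [IsFiniteMeasure F] {g : ℝ → ℝ}
    (hg : Continuous g) {s : Set ℝ} (hs : IsCompact s) (hF : F sᶜ = 0) : Integrable g F := by
  rw [← Measure.restrict_eq_self_of_ae_mem (mem_ae_iff.mpr hF)]
  exact hg.continuousOn.integrableOn_compact hs

theorem expW_sum [IsFiniteMeasure F] (hF : F (Icc (0:ℝ) 1)ᶜ = 0) {ι : Type*} (s : Finset ι)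
    {φ : ι → ℝ → ℝ} (hφ : ∀ i ∈ s, Continuous (φ i)) :
    expW F (fun w => ∑ i ∈ s, φ i w) = ∑ i ∈ s, expW F (φ i) := by
  have hinner : ∀ i ∈ s, Continuous fun y => ∫ u in Ioo (0:ℝ) 1, φ i (u * y) * (2 * u) :=
    fun i hi => continuous_integral_Ioo (f := fun y u => φ i (u * y) * (2 * u))
      (by have := hφ i hi; fun_prop)
  unfold expW
  simp_rw [Finset.sum_mul]
  rw [← integral_finsetSum _ fun i hi =>
    (hinner i hi).integrable_of_measure_compl_eq_zero isCompact_Icc hF]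
  refine integral_congr_ae (ae_of_all _ fun y => integral_finsetSum _ fun i hi => ?_)
  exact (Continuous.integrableOn_Icc (by have := hφ i hi; fun_prop)).mono_set Ioo_subset_Icc_self

theorem expW_const_mul (a : ℝ) (φ : ℝ → ℝ) :
    expW F (fun w => a * φ w) = a * expW F φ := by
  simp only [expW, mul_assoc, integral_const_mul]

theorem expW_one [IsProbabilityMeasure F] : expW F (fun _ => 1) = 1 := by
  have h : ∫ u in Ioo (0:ℝ) 1, 2 * u = 1 := by
    rw [← integral_Ioc_eq_integral_Ioo, ← intervalIntegral.integral_of_le zero_le_one,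
      intervalIntegral.integral_const_mul, integral_id]
    norm_num
  simp [expW, h]

theorem Dop_X_pow (w x : ℝ) (k : ℕ) :
    Dop w (X ^ k) x =
      ∑ i ∈ range k, (k.choose i : ℝ) * (x * (1 - w)) ^ i * w ^ (k - 1 - i) := by
  rcases eq_or_ne w 0 with rfl | hw
  · cases k with
    | zero => simp [Dop]
    | succ m =>
      rw [sum_range_succ, sum_eq_zero fun i hi => by
        rw [zero_pow (by have := mem_range.mp hi; omega), mul_zero]]
      simp [Dop]
  · rw [Dop, if_neg hw, div_eq_iff hw, sum_mul]
    simp only [eval_pow, eval_X]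
    rw [add_pow, sum_range_succ, Nat.choose_self, Nat.cast_one, Nat.sub_self, pow_zero, mul_one,
      mul_one, add_sub_cancel_right]
    refine sum_congr rfl fun i hi => ?_
    rw [show k - i = k - 1 - i + 1 by have := mem_range.mp hi; omega, pow_succ]
    ring

theorem Dop_eq_sum_coeff_mul (w x : ℝ) (p : ℝ[X]) :
    Dop w p x = ∑ k ∈ range (p.natDegree + 1), p.coeff k * Dop w (X ^ k) x := by
  conv_lhs => rw [p.as_sum_range_C_mul_X_pow]
  unfold Dop
  split_ifs
  · simp [eval_finsetSum]
  · simp only [eval_finsetSum, eval_mul, eval_C, eval_pow, eval_X, ← sum_sub_distrib, sum_div]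
    exact sum_congr rfl fun k _ => by ring

noncomputable def mixedMom (F : Measure ℝ) (i j : ℕ) : ℝ :=
  expW F fun w => (1 - w) ^ i * w ^ j

noncomputable def momentOp (F : Measure ℝ) : ℝ[X] →ₗ[ℝ] ℝ[X] :=
  (basisMonomials ℝ).constr ℝ fun k =>
    ∑ i ∈ range k, C ((k.choose i : ℝ) * mixedMom F i (k - 1 - i)) * X ^ i

theorem momentOp_X_pow (k : ℕ) :
    momentOp F (X ^ k) =
      ∑ i ∈ range k, C ((k.choose i : ℝ) * mixedMom F i (k - 1 - i)) * X ^ i := by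
  rw [← monomial_one_right_eq_X_pow, momentOp]
  exact (basisMonomials ℝ).constr_basis ℝ _ k

theorem degree_momentOp_X_pow_lt (k : ℕ) : (momentOp F (X ^ k)).degree < k := by
  rw [momentOp_X_pow, ← mem_degreeLT]
  exact Submodule.sum_mem _ fun i hi =>
    mem_degreeLT.mpr ((degree_C_mul_X_pow_le _ _).trans_lt (by exact_mod_cast mem_range.mp hi))

theorem mixedMom_zero_right (i : ℕ) : mixedMom F i 0 = expMom F i := by
  simp [mixedMom, expW, expMom]

theorem coeff_momentOp_X_pow_succ (k : ℕ) :
    (momentOp F (X ^ (k + 1))).coeff k = (k + 1) * expMom F k := by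
  rw [momentOp_X_pow, finsetSum_coeff]
  simp only [coeff_C_mul_X_pow]
  rw [sum_ite_eq _ _, if_pos (self_mem_range_succ k), Nat.choose_succ_self_right,
    Nat.add_sub_cancel, Nat.sub_self, mixedMom_zero_right]
  push_cast
  ring

theorem expD_eq_eval_momentOp [IsFiniteMeasure F] (hF : F (Icc (0:ℝ) 1)ᶜ = 0) (p : ℝ[X])
    (x : ℝ) : expD F p x = (momentOp F p).eval x := by
  have hDop : ∀ w, Dop w p x = ∑ k ∈ range (p.natDegree + 1), ∑ i ∈ range k,
      p.coeff k * (k.choose i : ℝ) * x ^ i * ((1 - w) ^ i * w ^ (k - 1 - i)) := fun w => by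
    rw [Dop_eq_sum_coeff_mul]
    simp only [Dop_X_pow, mul_sum, mul_pow]
    exact sum_congr rfl fun k _ => sum_congr rfl fun i _ => by ring
  change expW F (fun w => Dop w p x) = _
  simp_rw [hDop]
  rw [(momentOp F).apply_eq_sum_coeff_smul p.natDegree.lt_succ_self,
    expW_sum hF _ fun k _ => by fun_prop]
  simp only [eval_finsetSum, eval_smul, momentOp_X_pow, eval_mul, eval_C, eval_X_pow, smul_eq_mul]
  refine sum_congr rfl fun k _ => ?_
  rw [expW_sum hF _ fun i _ => by fun_prop, mul_sum]
  refine sum_congr rfl fun i _ => ?_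
  rw [expW_const_mul, mixedMom]
  ring

theorem expD_eq_on_Icc_iff [IsFiniteMeasure F] (hF : F (Icc (0:ℝ) 1)ᶜ = 0) (p q : ℝ[X])
    (a : ℝ) :
    (∀ x ∈ Icc (0:ℝ) 1, expD F p x = a * q.eval x) ↔ momentOp F p = a • q := by
  simp only [expD_eq_eval_momentOp hF, ← smul_eq_mul, ← eval_smul]
  refine ⟨fun h => eq_of_infinite_eval_eq _ _ ((Icc_infinite zero_lt_one).mono h),
    fun h x _ => by rw [h]⟩

theorem expMom_zero [IsProbabilityMeasure F] : expMom F 0 = 1 := by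
  rw [← expW_one (F := F)]
  simp [expMom, expW]

theorem coeff_momentOp_X_pow_succ_ne_zero (hmom : ∀ j, expMom F j ≠ 0) (k : ℕ) :
    (momentOp F (X ^ (k + 1))).coeff k ≠ 0 := by
  rw [coeff_momentOp_X_pow_succ]
  exact mul_ne_zero k.cast_add_one_ne_zero (hmom k)

theorem natDegree_eq_and_coeff_of_momentOp_eq [IsProbabilityMeasure F]
    (hmom : ∀ j, expMom F j ≠ 0) {p q : ℝ[X]} {n : ℕ} (hq : q.natDegree ≤ n)
    (hqn : q.coeff n = (∏ j ∈ Icc 1 (n - 1), expMom F j)⁻¹)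
    (hT : momentOp F p = ((n + 1 : ℕ) : ℝ) • q) :
    p.natDegree = n + 1 ∧ p.coeff (n + 1) = (∏ j ∈ Icc 1 n, expMom F j)⁻¹ := by
  obtain ⟨hle, hcoeff⟩ := natDegree_le_and_coeff_of_apply_eq degree_momentOp_X_pow_lt
    (coeff_momentOp_X_pow_succ_ne_zero hmom) hT ((natDegree_smul_le _ _).trans hq)
  have hprod := prod_Icc_one_sub_one_eq_prod_range (expMom_zero (F := F))
  rw [coeff_smul, hqn, coeff_momentOp_X_pow_succ, hprod] at hcoeff
  have hlc : p.coeff (n + 1) = (∏ j ∈ Icc 1 n, expMom F j)⁻¹ := by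
    rw [show Finset.Icc 1 n = Finset.Icc 1 (n + 1 - 1) from rfl, hprod, prod_range_succ, mul_inv,
      eq_mul_inv_iff_mul_eq₀ (hmom n)]
    refine mul_left_cancel₀ (n.cast_add_one_ne_zero (R := ℝ)) ?_
    rw [smul_eq_mul] at hcoeff
    push_cast at hcoeff
    linear_combination hcoeff
  refine ⟨natDegree_eq_of_le_of_coeff_ne_zero hle ?_, hlc⟩
  exact hlc ▸ inv_ne_zero (prod_ne_zero_iff.mpr fun j _ => hmom j)

end Moments

theorem stmt9 (F : Measure ℝ) [IsProbabilityMeasure F]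
    (hF : F (Set.Icc (0:ℝ) 1)ᶜ = 0)
    (hpos : ∀ j : ℕ, 1 ≤ j → 0 < expMom F j) :
    ∀ c : ℕ → ℝ, ∃! h : ℕ → Polynomial ℝ,
      h 0 = 1 ∧
      ∀ n : ℕ, 1 ≤ n →
        (h n).natDegree = n ∧
        (h n).coeff 0 = c n ∧
        (h n).leadingCoeff = (∏ j ∈ Finset.Icc 1 (n - 1), expMom F j)⁻¹ ∧
        ∀ x ∈ Set.Icc (0:ℝ) 1, expD F (h n) x = n * Polynomial.eval x (h (n - 1)) := by
  intro c
  have hmom : ∀ j, expMom F j ≠ 0 := fun j => by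
    rcases j.eq_zero_or_pos with rfl | hj
    · exact expMom_zero.trans_ne one_ne_zero
    · exact (hpos j hj).ne'
  obtain ⟨h, ⟨h0, hstep⟩, huniq⟩ := Nat.existsUnique_seq (1 : Polynomial ℝ)
    (fun n q p => p.coeff 0 = c (n + 1) ∧ momentOp F p = ((n + 1 : ℕ) : ℝ) • q)
    fun n q => existsUnique_coeff_zero_eq_and_apply_eq degree_momentOp_X_pow_lt
      (coeff_momentOp_X_pow_succ_ne_zero hmom) _ _
  have hshape : ∀ n, (h n).natDegree = n ∧
      (h n).coeff n = (∏ j ∈ Finset.Icc 1 (n - 1), expMom F j)⁻¹ := by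
    intro n
    induction n with
    | zero => simp [h0]
    | succ n ih => exact natDegree_eq_and_coeff_of_momentOp_eq hmom ih.1.le ih.2 (hstep n).2
  refine ⟨h, ⟨h0, fun n hn => ?_⟩, fun g ⟨g0, hg⟩ => huniq g ⟨g0, fun n => ?_⟩⟩
  · obtain ⟨n, rfl⟩ := Nat.exists_eq_add_of_le' hn
    refine ⟨(hshape _).1, (hstep n).1, by rw [leadingCoeff, (hshape _).1, (hshape _).2],
      (expD_eq_on_Icc_iff hF _ _ _).mpr ?_⟩
    simpa using (hstep n).2
  · obtain ⟨-, hc, -, hD⟩ := hg (n + 1) n.succ_pos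
    exact ⟨hc, (expD_eq_on_Icc_iff hF _ _ _).mp (by simpa using hD)⟩
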